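/- The $17 \times 17$ matrix $P_{Mermin} = \begin{pmatrix} 1 & a e_{16}^T \\ a e_{16} & a I_{16} + b E_{\overline{G_M}} \end{pmatrix}$ with $a = 1/4$, $b = 1/8$, where $E_{\overline{G_M}}$ is the adjacency matrix of the complement of the exclusivity graph $G_M$ of the tripartite Mermin inequality (the complement of the Shrikhande graph), is positive semidefinite, has rank 7, and satisfies $\sum_{i=1}^{16} (P_{Mermin})_{ii} = 4$. -/
import Mathlib


/-- Adjacency matrix of the Shrikhande graph (the complement of the Mermin
exclusivity graph `G_M`), realized as the Cayley graph on `ZMod 4 × ZMod 4`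
with connection set `{±(1,0), ±(0,1), ±(1,1)}`. -/
def shrikhandeAdj : Matrix (ZMod 4 × ZMod 4) (ZMod 4 × ZMod 4) ℝ := fun v u =>
  if v - u = (1, 0) ∨ v - u = (-1, 0) ∨ v - u = (0, 1) ∨ v - u = (0, -1) ∨
     v - u = (1, 1) ∨ v - u = (-1, -1) then 1 else 0

/-- The primal-optimal Mermin matrix
`P_Mermin = [[1, a e^T],[a e, a I + b E]]` with `a = 1/4`, `b = 1/8`,
where `E` is the adjacency matrix of the Shrikhande graph. -/
noncomputable def Pmermin :
    Matrix (Fin 1 ⊕ ZMod 4 × ZMod 4) (Fin 1 ⊕ ZMod 4 × ZMod 4) ℝ :=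
  Matrix.fromBlocks
    (fun _ _ => 1) (fun _ _ => (1 : ℝ) / 4) (fun _ _ => (1 : ℝ) / 4)
    (((1 : ℝ) / 4) • (1 : Matrix (ZMod 4 × ZMod 4) (ZMod 4 × ZMod 4) ℝ) +
      ((1 : ℝ) / 8) • shrikhandeAdj)

namespace MerminAux

open Matrix

def icc : ZMod 4 → ℤ := fun k => if k = 0 then 1 else if k = 2 then -1 else 0
def iss : ZMod 4 → ℤ := fun k => if k = 1 then 1 else if k = 3 then -1 else 0
noncomputable def cc : ZMod 4 → ℝ := fun k => (icc k : ℝ)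
noncomputable def ssf : ZMod 4 → ℝ := fun k => (iss k : ℝ)

def ig : Fin 7 → ZMod 4 × ZMod 4 → ℤ
  | 0 => fun _ => 1
  | 1 => fun v => icc v.1
  | 2 => fun v => iss v.1
  | 3 => fun v => icc v.2
  | 4 => fun v => iss v.2
  | 5 => fun v => icc (v.1 - v.2)
  | 6 => fun v => iss (v.1 - v.2)

noncomputable def g : Fin 7 → ZMod 4 × ZMod 4 → ℝ := fun k v => (ig k v : ℝ)

noncomputable def Nmat : Matrix (Fin 7) (Fin 1 ⊕ ZMod 4 × ZMod 4) ℝ :=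
  fun k => Sum.elim (fun _ => if k = 0 then 1 else 0) (fun v => (1/4) * g k v)

lemma zmod4_sum (f : ZMod 4 → ℝ) : ∑ x, f x = f 0 + (f 1 + (f 2 + f 3)) := by
  rw [show (Finset.univ : Finset (ZMod 4)) = {0,1,2,3} by decide]
  rw [Finset.sum_insert (by decide), Finset.sum_insert (by decide),
    Finset.sum_insert (by decide), Finset.sum_singleton]

lemma cosdiff (a b : ZMod 4) : cc a * cc b + ssf a * ssf b = cc (a - b) := by
  have h : ∀ a b : ZMod 4, icc a * icc b + iss a * iss b = icc (a - b) := by decide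
  have := congrArg (fun z : ℤ => (z : ℝ)) (h a b)
  simp only [cc, ssf]
  push_cast at this
  linarith

lemma zkey (v u : ZMod 4 × ZMod 4) :
    (if v = u then (4:ℤ) else 0) +
    (if v - u = (1, 0) ∨ v - u = (-1, 0) ∨ v - u = (0, 1) ∨ v - u = (0, -1) ∨
       v - u = (1, 1) ∨ v - u = (-1, -1) then 2 else 0)
    = 1 + icc (v.1 - u.1) + icc (v.2 - u.2) + icc ((v.1 - u.1) - (v.2 - u.2)) := by
  revert v u; decide

lemma rkey (v u : ZMod 4 × ZMod 4) :
    (if v = u then (4:ℝ) else 0) +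
    (if v - u = (1, 0) ∨ v - u = (-1, 0) ∨ v - u = (0, 1) ∨ v - u = (0, -1) ∨
       v - u = (1, 1) ∨ v - u = (-1, -1) then 2 else 0)
    = 1 + cc (v.1 - u.1) + cc (v.2 - u.2) + cc ((v.1 - u.1) - (v.2 - u.2)) := by
  have := congrArg (fun z : ℤ => (z : ℝ)) (zkey v u)
  simp only [cc]
  push_cast [apply_ite (fun z : ℤ => (z : ℝ))] at this
  convert this using 2

lemma factor : Pmermin = Nmatᵀ * Nmat := by
  ext i j
  rcases i with i | v <;> rcases j with j | u
  · simp [Pmermin, Matrix.fromBlocks, Matrix.mul_apply, Fin.sum_univ_seven, Nmat, g, ig]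
  · simp [Pmermin, Matrix.fromBlocks, Matrix.mul_apply, Fin.sum_univ_seven, Nmat, g, ig]
  · simp [Pmermin, Matrix.fromBlocks, Matrix.mul_apply, Fin.sum_univ_seven, Nmat, g, ig]
  · have h1 := cosdiff v.1 u.1
    have h2 := cosdiff v.2 u.2
    have h3 := cosdiff (v.1 - v.2) (u.1 - u.2)
    have e3 : (v.1 - v.2) - (u.1 - u.2) = (v.1 - u.1) - (v.2 - u.2) := by ring
    rw [e3] at h3
    have hz := rkey v u
    simp only [cc, ssf] at h1 h2 h3 hz
    simp only [Pmermin, Matrix.fromBlocks, Matrix.of_apply, Sum.elim_inl, Sum.elim_inr,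
      Matrix.mul_apply, Matrix.transpose_apply, Fin.sum_univ_seven, Nmat, g, ig, cc, ssf,
      Matrix.add_apply, Matrix.smul_apply, Matrix.one_apply, shrikhandeAdj, smul_eq_mul]
    split_ifs at hz ⊢ <;> linarith [h1, h2, h3, hz]

lemma g_eq (k : Fin 7) (v : ZMod 4 × ZMod 4) : g k v = (ig k v : ℝ) := rfl

lemma igsum : ∀ k l : Fin 7, ∑ v : ZMod 4 × ZMod 4, ig k v * ig l v =
    (if k = 0 ∧ l = 0 then 16 else if k = l then 8 else 0) := by decide

lemma gsum (k l : Fin 7) : ∑ v : ZMod 4 × ZMod 4, g k v * g l v =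
    (if k = 0 ∧ l = 0 then (16:ℝ) else if k = l then 8 else 0) := by
  have := congrArg (fun z : ℤ => (z : ℝ)) (igsum k l)
  push_cast [apply_ite (fun z : ℤ => (z : ℝ))] at this
  simpa [g_eq] using this

lemma diag : Nmat * Nmatᵀ =
    Matrix.diagonal (fun i : Fin 7 => if i = 0 then (2:ℝ) else 1/2) := by
  ext k l
  rw [Matrix.mul_apply, Fintype.sum_sum_type]
  simp only [Nmat, Matrix.transpose_apply, Sum.elim_inl, Sum.elim_inr]
  simp only [show ∀ v : ZMod 4 × ZMod 4, (1:ℝ)/4 * g k v * (1/4 * g l v)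
      = 1/16 * (g k v * g l v) from fun v => by ring]
  have hms : ∑ x : ZMod 4 × ZMod 4, (1:ℝ)/16 * (g k x * g l x)
      = 1/16 * ∑ x : ZMod 4 × ZMod 4, g k x * g l x := (Finset.mul_sum _ _ _).symm
  rw [hms, gsum, Matrix.diagonal_apply]
  split_ifs <;> simp_all <;> norm_num

lemma conjT : Nmatᴴ = Nmatᵀ := by
  ext i j; simp [Matrix.conjTranspose_apply]

lemma isUnit_diag :
    IsUnit (Matrix.diagonal (fun i : Fin 7 => if i = 0 then (2:ℝ) else 1/2)) := by
  rw [Matrix.isUnit_iff_isUnit_det, Matrix.det_diagonal, Fin.prod_univ_seven]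
  simp

end MerminAux

open Matrix MerminAux in
/-- `P_Mermin` is positive semidefinite, has rank 7, and its trailing diagonal sums to 4. -/
theorem Pmermin_posSemidef_rank_trace :
    Pmermin.PosSemidef ∧ Pmermin.rank = 7 ∧
      ∑ v : ZMod 4 × ZMod 4, Pmermin (Sum.inr v) (Sum.inr v) = 4 := by
  refine ⟨?_, ?_, ?_⟩
  · have h : Pmermin = Nmatᴴ * Nmat := by
      rw [conjT]; exact factor
    rw [h]
    exact Matrix.posSemidef_conjTranspose_mul_self _
  · rw [factor, Matrix.rank_transpose_mul_self]
    refine le_antisymm ?_ ?_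
    · simpa using Matrix.rank_le_card_height Nmat
    · have h1 : (Nmat * Nmatᵀ).rank = 7 := by
        rw [MerminAux.diag, Matrix.rank_of_isUnit _ isUnit_diag]
        simp
      calc (7:ℕ) = (Nmat * Nmatᵀ).rank := h1.symm
        _ ≤ Nmat.rank := Matrix.rank_mul_le_left _ _
  · have hdiag : ∀ v : ZMod 4 × ZMod 4,
        Pmermin (Sum.inr v) (Sum.inr v) = 1/4 := by
      intro v
      have h0 : shrikhandeAdj v v = 0 := if_neg (by simp only [sub_self]; decide)
      simp [Pmermin, Matrix.fromBlocks, Matrix.one_apply, h0]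
    rw [Finset.sum_congr rfl fun v _ => hdiag v]
    simp [Finset.card_univ]
    norm_num
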